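/- Suppose $Y$ is a finite set of prime ideals of $R$. Then for any ideal $I$ of $R$ the following are equivalent: (i) $I$ is an $\mathcal{H}_Y$-ideal; (ii) $I$ is a strong $\mathcal{H}_Y$-ideal; (iii) $I$ is a $Y$-Hilbert ideal. -/

import Mathlib

/-- `hSet Y S` is the set of primes (ideals) in `Y` containing the subset `S`. -/
def hSet {R : Type*} [CommRing R] (Y : Set (Ideal R)) (S : Set R) : Set (Ideal R) :=
  {P ∈ Y | S ⊆ (P : Set R)}

/-- `kSet 𝒮` is the intersection of the ideals in `𝒮` (the whole ring if `𝒮 = ∅`). -/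
def kSet {R : Type*} [CommRing R] (𝒮 : Set (Ideal R)) : Ideal R := sInf 𝒮

/-- An `ℋ_Y`-ideal. -/
def IsHIdeal {R : Type*} [CommRing R] (Y : Set (Ideal R)) (I : Ideal R) : Prop :=
  ∀ a ∈ I, ∀ b : R, hSet Y {a} ⊆ hSet Y {b} → b ∈ I

/-- A strong `ℋ_Y`-ideal. -/
def IsStrongHIdeal {R : Type*} [CommRing R] (Y : Set (Ideal R)) (I : Ideal R) : Prop :=
  ∀ F : Set R, F.Finite → F ⊆ (I : Set R) → ∀ b : R, hSet Y F ⊆ hSet Y {b} → b ∈ I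

/-- A `Y`-Hilbert ideal. -/
def IsYHilbert {R : Type*} [CommRing R] (Y : Set (Ideal R)) (I : Ideal R) : Prop :=
  I = kSet (hSet Y (I : Set R))

section HilbertIdeals

variable {R : Type*} [CommRing R] {Y : Set (Ideal R)}

theorem mem_hSet_singleton {P : Ideal R} {a : R} : P ∈ hSet Y {a} ↔ P ∈ Y ∧ a ∈ P := by
  simp [hSet]

theorem hSet_anti {S T : Set R} (hST : S ⊆ T) : hSet Y T ⊆ hSet Y S :=
  fun _ hP => ⟨hP.1, hST.trans hP.2⟩

theorem hSet_subset_hSet_singleton_iff {S : Set R} {b : R} :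
    hSet Y S ⊆ hSet Y {b} ↔ b ∈ kSet (hSet Y S) := by
  simp only [kSet, Ideal.mem_sInf, Set.subset_def, mem_hSet_singleton]
  exact ⟨fun h P hP => (h P hP).2, fun h P hP => ⟨hP.1, h hP⟩⟩

theorem le_kSet_hSet (I : Ideal R) : I ≤ kSet (hSet Y (I : Set R)) :=
  fun _ hb => Ideal.mem_sInf.2 fun _ hP => hP.2 hb

theorem Ideal.exists_mem_forall_notMem_of_finite {I : Ideal R} {B : Set (Ideal R)}
    (hB : B.Finite) (hprime : ∀ P ∈ B, P.IsPrime) (hI : ∀ P ∈ B, ¬I ≤ P) :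
    ∃ a ∈ I, ∀ P ∈ B, a ∉ P := by
  by_contra! h
  obtain ⟨P, hP, hIP⟩ := (Ideal.subset_union_prime_finite hB (f := id) ⊥ ⊥
    fun P hP _ _ => hprime P hP).1 fun x hx => by simpa using h x hx
  exact hI P hP hIP

/-- Prime avoidance gives an `a ∈ I` outside every prime of `Y` that does not contain `I`. -/
theorem exists_hSet_singleton_eq (hprime : ∀ P ∈ Y, P.IsPrime) (hfin : Y.Finite) (I : Ideal R) :
    ∃ a ∈ I, hSet Y {a} = hSet Y (I : Set R) := by
  obtain ⟨a, haI, ha⟩ := Ideal.exists_mem_forall_notMem_of_finite (I := I)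
    (hfin.subset fun P (hP : P ∈ Y ∧ ¬I ≤ P) => hP.1) (fun P hP => hprime P hP.1)
    fun P hP => hP.2
  refine ⟨a, haI, Set.Subset.antisymm (fun P hP => ?_) (hSet_anti (by simpa using haI))⟩
  obtain ⟨hPY, haP⟩ := mem_hSet_singleton.1 hP
  exact ⟨hPY, not_not.1 fun hIP => ha P ⟨hPY, hIP⟩ haP⟩

theorem IsYHilbert.isStrongHIdeal {I : Ideal R} (h : IsYHilbert Y I) : IsStrongHIdeal Y I := by
  intro F _ hFI b hb
  rw [h]
  exact hSet_subset_hSet_singleton_iff.1 ((hSet_anti hFI).trans hb)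

theorem IsStrongHIdeal.isHIdeal {I : Ideal R} (h : IsStrongHIdeal Y I) : IsHIdeal Y I :=
  fun a ha b hab => h {a} (Set.finite_singleton a) (by simpa using ha) b hab

theorem IsHIdeal.isYHilbert (hprime : ∀ P ∈ Y, P.IsPrime) (hfin : Y.Finite) {I : Ideal R}
    (h : IsHIdeal Y I) : IsYHilbert Y I := by
  refine le_antisymm (le_kSet_hSet I) fun b hb => ?_
  obtain ⟨a, haI, ha⟩ := exists_hSet_singleton_eq hprime hfin I
  exact h a haI b (ha ▸ hSet_subset_hSet_singleton_iff.2 hb)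

end HilbertIdeals

/-- if `Y` is finite then `ℋ_Y`-ideal, strong `ℋ_Y`-ideal and
`Y`-Hilbert ideal are equivalent notions. -/
theorem stmt16 {R : Type*} [CommRing R] (Y : Set (Ideal R))
    (hprime : ∀ P ∈ Y, P.IsPrime) (hfin : Y.Finite) (I : Ideal R) :
    [ IsHIdeal Y I, IsStrongHIdeal Y I, IsYHilbert Y I ].TFAE := by
  tfae_have 1 → 3 := IsHIdeal.isYHilbert hprime hfin
  tfae_have 3 → 2 := IsYHilbert.isStrongHIdeal
  tfae_have 2 → 1 := IsStrongHIdeal.isHIdeal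
  tfae_finish
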